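/- arXiv:1807.00391 — 3 statements merged into one kernel-verified Lean document; each statement's English description precedes it below -/
import Mathlib

section
/- Let N ≥ 1, let m be a positive divisor of N, let (A, B; C, D) ∈ SL₂(ℤ), and set N' = N/gcd(CD, N) and m' = m/gcd(BC, m). Let μ, ν ∈ ℤ be coprime to N with μ ≡ ν ≡ 1 (mod N'), and let μ*, ν*, (μν)* ∈ ℤ be inverses of μ, ν, μν modulo N. Then: (i) gcd(AD − μ*BC, N) = 1; (ii) AD − (μν)*BC ≡ (AD − μ*BC)(AD − ν*BC) (mod m); (iii) if moreover μ ≡ ν (mod m'), then AD − μ*BC ≡ AD − ν*BC (mod m). -/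
/-!
Write `f u = A D - u B C`. Since `B C = A D - 1`, expanding gives
`f u * f v = f (u v) + (1 - u)(1 - v) (A B)(C D)`, so `f` is multiplicative modulo `N` as soon as
`N ∣ (1 - u) C D`, which is exactly what `u ≡ 1 (mod N')` provides. Then (i) follows from
`f μ* · f μ ≡ f 1 = 1`, (ii) from `μ* ν* ≡ (μν)*`, and (iii) from
`μ* − ν* ≡ μ* ν* (ν − μ) (mod N)` together with `m ∣ (ν − μ) B C`, which is what `μ ≡ ν (mod m')`
provides.
-/

theorem Int.dvd_mul_of_ediv_gcd_dvd {n a k : ℤ} (h : n / (Int.gcd a n : ℤ) ∣ k) : n ∣ k * a := by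
  obtain ⟨j, hj⟩ := h
  obtain ⟨a', ha⟩ := Int.gcd_dvd_left a n
  have hn : n / (Int.gcd a n : ℤ) * (Int.gcd a n : ℤ) = n :=
    Int.ediv_mul_cancel (Int.gcd_dvd_right _ _)
  exact ⟨j * a', by linear_combination hj * a + (n / (Int.gcd a n : ℤ) * j) * ha + (j * a') * hn⟩

theorem Int.modEq_one_of_mul_modEq_one {n a b : ℤ} (ha : a ≡ 1 [ZMOD n])
    (hab : a * b ≡ 1 [ZMOD n]) : b ≡ 1 [ZMOD n] :=
  calc b = 1 * b := (one_mul b).symm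
    _ ≡ a * b [ZMOD n] := ha.symm.mul_right b
    _ ≡ 1 [ZMOD n] := hab

theorem Int.sub_modEq_mul_mul_sub_of_mul_modEq_one {n a b a' b' : ℤ}
    (ha : a * a' ≡ 1 [ZMOD n]) (hb : b * b' ≡ 1 [ZMOD n]) :
    a' - b' ≡ a' * b' * (b - a) [ZMOD n] :=
  calc a' - b' = a' * 1 - b' * 1 := by ring
    _ ≡ a' * (b * b') - b' * (a * a') [ZMOD n] := (hb.symm.mul_left a').sub (ha.symm.mul_left b')
    _ = a' * b' * (b - a) := by ring

theorem Int.mul_modEq_of_mul_modEq_one {n a b a' b' c : ℤ}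
    (ha : a * a' ≡ 1 [ZMOD n]) (hb : b * b' ≡ 1 [ZMOD n]) (hc : a * b * c ≡ 1 [ZMOD n]) :
    a' * b' ≡ c [ZMOD n] :=
  calc a' * b' = a' * b' * 1 := (mul_one _).symm
    _ ≡ a' * b' * (a * b * c) [ZMOD n] := hc.symm.mul_left _
    _ = a * a' * (b * b') * c := by ring
    _ ≡ 1 * 1 * c [ZMOD n] := (ha.mul hb).mul_right _
    _ = c := by ring

section SL2

variable {A B C D : ℤ}

theorem mul_eq_add_of_det_eq_one (hdet : A * D - B * C = 1) (u v : ℤ) :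
    (A * D - u * B * C) * (A * D - v * B * C) =
      A * D - u * v * B * C + (1 - u) * (C * D) * ((1 - v) * (A * B)) := by
  linear_combination (A * D - u * v * B * C) * hdet

theorem mul_modEq_of_det_eq_one (hdet : A * D - B * C = 1) {N u : ℤ}
    (hu : N ∣ (1 - u) * (C * D)) (v : ℤ) :
    (A * D - u * B * C) * (A * D - v * B * C) ≡ A * D - u * v * B * C [ZMOD N] := by
  rw [mul_eq_add_of_det_eq_one hdet]
  calc _ ≡ A * D - u * v * B * C + 0 [ZMOD N] :=
        (Int.modEq_zero_iff_dvd.mpr (hu.mul_right _)).add_left _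
    _ = A * D - u * v * B * C := add_zero _

theorem sub_mul_modEq_sub_mul {N u u' : ℤ} (h : u ≡ u' [ZMOD N]) :
    A * D - u * B * C ≡ A * D - u' * B * C [ZMOD N] :=
  ((h.mul_right B).mul_right C).sub_left (A * D)

theorem sub_mul_modEq_sub_mul_of_dvd {N u u' : ℤ} (h : N ∣ (u - u') * (B * C)) :
    A * D - u * B * C ≡ A * D - u' * B * C [ZMOD N] :=
  Int.modEq_iff_dvd.mpr (by convert h using 1; ring)

theorem isCoprime_of_det_eq_one (hdet : A * D - B * C = 1) {N u v : ℤ}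
    (hu : N ∣ (1 - u) * (C * D)) (huv : u * v ≡ 1 [ZMOD N]) :
    IsCoprime (A * D - u * B * C) N := by
  have hunit : (A * D - u * B * C) * (A * D - v * B * C) ≡ 1 [ZMOD N] := by
    calc _ ≡ A * D - u * v * B * C [ZMOD N] := mul_modEq_of_det_eq_one hdet hu v
      _ ≡ A * D - 1 * B * C [ZMOD N] := sub_mul_modEq_sub_mul huv
      _ = 1 := by linear_combination hdet
  obtain ⟨k, hk⟩ := hunit.dvd
  exact ⟨A * D - v * B * C, k, by linear_combination -hk⟩

end SL2

theorem stmt_7_general (N m : ℤ) (hmN : m ∣ N)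
    (A B C D : ℤ) (hdet : A * D - B * C = 1)
    (N' m' : ℤ)
    (hN' : N' = N / (Int.gcd (C * D) N : ℤ))
    (hm' : m' = m / (Int.gcd (B * C) m : ℤ))
    (μ ν μs νs μνs : ℤ)
    (hμ1 : μ ≡ 1 [ZMOD N'])
    (hμs : μ * μs ≡ 1 [ZMOD N]) (hνs : ν * νs ≡ 1 [ZMOD N])
    (hμνs : μ * ν * μνs ≡ 1 [ZMOD N]) :
    Int.gcd (A * D - μs * B * C) N = 1 ∧
    A * D - μνs * B * C ≡ (A * D - μs * B * C) * (A * D - νs * B * C) [ZMOD m] ∧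
    (μ ≡ ν [ZMOD m'] → A * D - μs * B * C ≡ A * D - νs * B * C [ZMOD m]) := by
  have hN'N : N' ∣ N := hN' ▸ Int.ediv_dvd_of_dvd (Int.gcd_dvd_right _ _)
  have hμs1 : μs ≡ 1 [ZMOD N'] := Int.modEq_one_of_mul_modEq_one hμ1 (hμs.of_dvd hN'N)
  have hdvd : N ∣ (1 - μs) * (C * D) :=
    Int.dvd_mul_of_ediv_gcd_dvd (hN' ▸ hμs1.dvd)
  refine ⟨Int.isCoprime_iff_gcd_eq_one.mp
    (isCoprime_of_det_eq_one hdet hdvd (by rwa [mul_comm] at hμs)), ?_, fun hμν => ?_⟩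
  · have hinv : μs * νs ≡ μνs [ZMOD N] := Int.mul_modEq_of_mul_modEq_one hμs hνs hμνs
    exact (((mul_modEq_of_det_eq_one hdet hdvd νs).trans
      (sub_mul_modEq_sub_mul hinv)).symm).of_dvd hmN
  · have hm : m ∣ (ν - μ) * (B * C) := Int.dvd_mul_of_ediv_gcd_dvd (hm' ▸ hμν.dvd)
    have hinv : μs - νs ≡ μs * νs * (ν - μ) [ZMOD m] :=
      (Int.sub_modEq_mul_mul_sub_of_mul_modEq_one hμs hνs).of_dvd hmN
    refine sub_mul_modEq_sub_mul_of_dvd ((hinv.mul_right (B * C)).dvd_iff.mpr ?_)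
    rw [mul_assoc]
    exact hm.mul_left _

/-- Let `N ≥ 1`, `m` a positive divisor of `N`, `(A,B;C,D) ∈ SL₂(ℤ)`,
`N' = N/gcd(CD,N)`, `m' = m/gcd(BC,m)`. Let `μ, ν` be coprime to `N` with
`μ ≡ ν ≡ 1 (mod N')`, and `μ*, ν*, (μν)*` inverses of `μ, ν, μν` modulo `N`. Then
(i) `gcd(AD − μ*BC, N) = 1`;
(ii) `AD − (μν)*BC ≡ (AD − μ*BC)(AD − ν*BC) (mod m)`;
(iii) if `μ ≡ ν (mod m')` then `AD − μ*BC ≡ AD − ν*BC (mod m)`. -/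
theorem stmt_7 (N m : ℤ) (hN : 1 ≤ N) (hm : 0 < m) (hmN : m ∣ N)
    (A B C D : ℤ) (hdet : A * D - B * C = 1)
    (N' m' : ℤ)
    (hN' : N' = N / (Int.gcd (C * D) N : ℤ))
    (hm' : m' = m / (Int.gcd (B * C) m : ℤ))
    (μ ν μs νs μνs : ℤ)
    (hμ : IsCoprime μ N) (hν : IsCoprime ν N)
    (hμ1 : μ ≡ 1 [ZMOD N']) (hν1 : ν ≡ 1 [ZMOD N'])
    (hμs : μ * μs ≡ 1 [ZMOD N]) (hνs : ν * νs ≡ 1 [ZMOD N])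
    (hμνs : μ * ν * μνs ≡ 1 [ZMOD N]) :
    Int.gcd (A * D - μs * B * C) N = 1 ∧
    A * D - μνs * B * C ≡ (A * D - μs * B * C) * (A * D - νs * B * C) [ZMOD m] ∧
    (μ ≡ ν [ZMOD m'] → A * D - μs * B * C ≡ A * D - νs * B * C [ZMOD m]) :=
  stmt_7_general N m hmN A B C D hdet N' m' hN' hm' μ ν μs νs μνs hμ1 hμs hνs hμνs
end

section
/- Let N ≥ 1, let m be a positive divisor of N, and let (A, B; C, D) ∈ SL₂(ℤ). For an integer n ≥ 1 let n_C denote the largest divisor of n all of whose prime factors divide C (with n_C = n if C = 0), and n_{C̄} = n/n_C. For u ∈ ℤ set M_u = lcm( N/gcd(C(uC+D), N), m/gcd(C(uA+B), m) ), and set M' = (N_C/gcd(C, N)) · m_{C̄}. Then: (i) M' divides M_u for every u ∈ ℤ; (ii) there exists u ∈ ℤ such that N/N_C divides uC + D, and for every such u one has M_u = M'. -/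
/-!
Write `x = uC + D`, `y = uA + B`; then `Ax - Cy = 1`, so `x` is prime to both `C` and `y`.
`N / gcd(k, N)` is the additive order of `k` modulo `N`, and everything is compared one prime `p`
at a time. If `p ∣ C` then `p ∤ x`, so the `p`-part of `gcd(Cx, N)` is that of `gcd(C, N)`, and
the `m`-term never dominates because the order of an element modulo `m` divides its order
modulo `N`: both `M_u` and `M'` have valuation `v_p(N) - v_p(gcd(C, N))`. If `p ∤ C` then
`v_p(M') = v_p(m)`: when `p ∤ x` the `N`-term already has valuation `v_p(N)`, and when `p ∣ x`
we have `p ∤ y` and the `m`-term has valuation `v_p(m)`. If moreover `N/N_C ∣ x`, the `N`-term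
has valuation `0`, so `v_p(M_u) ≤ v_p(m)`.
-/

/-- `cPart q n` is the largest divisor of `n` all of whose prime factors divide `q`
(equal to `n` when `q = 0`, since every prime divides `0`). -/
def cPart (q n : ℕ) : ℕ :=
  ∏ p ∈ n.primeFactors.filter (fun p => p ∣ q), p ^ n.factorization p

theorem Nat.div_gcd_ne_zero (k : ℕ) {n : ℕ} (hn : n ≠ 0) : n / Nat.gcd k n ≠ 0 :=
  (Nat.div_ne_zero_iff_of_dvd (Nat.gcd_dvd_right k n)).2 ⟨hn, Nat.gcd_ne_zero_right hn⟩

theorem Nat.factorization_div_gcd (k n p : ℕ) :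
    (n / Nat.gcd k n).factorization p = n.factorization p - (Nat.gcd k n).factorization p := by
  rw [Nat.factorization_div (Nat.gcd_dvd_right k n), Finsupp.tsub_apply]

theorem Nat.factorization_gcd_eq_zero_of_not_dvd {p k : ℕ} (n : ℕ) (h : ¬ p ∣ k) :
    (Nat.gcd k n).factorization p = 0 :=
  Nat.factorization_eq_zero_of_not_dvd fun hp => h (hp.trans (Nat.gcd_dvd_left k n))

theorem Nat.factorization_gcd_mul_of_not_dvd {p a n : ℕ} (c : ℕ) (hp : p.Prime) (hn : n ≠ 0)
    (ha : ¬ p ∣ a) : (Nat.gcd (c * a) n).factorization p = (Nat.gcd c n).factorization p := by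
  have hpa : Nat.Coprime (p ^ (Nat.gcd (c * a) n).factorization p) a :=
    ((Nat.Prime.coprime_iff_not_dvd hp).2 ha).pow_left _
  have hdvd : p ^ (Nat.gcd (c * a) n).factorization p ∣ Nat.gcd c n :=
    Nat.dvd_gcd (hpa.dvd_of_dvd_mul_right ((Nat.ordProj_dvd _ p).trans (Nat.gcd_dvd_left _ _)))
      ((Nat.ordProj_dvd _ p).trans (Nat.gcd_dvd_right _ _))
  refine le_antisymm ((hp.pow_dvd_iff_le_factorization (Nat.gcd_ne_zero_right hn)).1 hdvd) ?_
  exact (Nat.factorization_le_iff_dvd (Nat.gcd_ne_zero_right hn) (Nat.gcd_ne_zero_right hn)).2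
    (Nat.gcd_dvd_gcd_mul_right_left c n a) p

theorem Nat.div_gcd_dvd_div_gcd_of_dvd {m n : ℕ} (k : ℕ) (h : m ∣ n) :
    m / Nat.gcd k m ∣ n / Nat.gcd k n := by
  rcases eq_or_ne n 0 with rfl | hn
  · simp
  have hm := ne_zero_of_dvd_ne_zero hn h
  rw [Nat.gcd_comm k, Nat.gcd_comm k, ← ZMod.addOrderOf_coe k hm, ← ZMod.addOrderOf_coe k hn]
  simpa using addOrderOf_map_dvd (ZMod.castHom h (ZMod m)).toAddMonoidHom (k : ZMod n)

theorem IsCoprime.exists_dvd_mul_add {R : Type*} [CommRing R] {a n : R} (h : IsCoprime a n)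
    (b : R) : ∃ u, n ∣ u * a + b := by
  obtain ⟨x, y, hxy⟩ := h
  exact ⟨-b * x, b * y, by linear_combination (-b) * hxy⟩

theorem cPart_eq_prod_filter (q n : ℕ) :
    cPart q n = (n.factorization.filter (· ∣ q)).prod (· ^ ·) := by
  rw [Finsupp.prod, Finsupp.support_filter, Nat.support_factorization, cPart]
  exact Finset.prod_congr rfl fun p hp => by
    rw [Finsupp.filter_apply_pos (· ∣ q) _ (Finset.mem_filter.1 hp).2]

theorem factorization_cPart (q n p : ℕ) :
    (cPart q n).factorization p = if p ∣ q then n.factorization p else 0 := by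
  rw [cPart_eq_prod_filter, Nat.prod_pow_factorization_eq_self fun r hr =>
    Nat.prime_of_mem_primeFactors (Finset.mem_of_mem_filter r hr), Finsupp.filter_apply]

theorem cPart_ne_zero (q n : ℕ) : cPart q n ≠ 0 :=
  Finset.prod_ne_zero_iff.2 fun _ hp => pow_ne_zero _ (Nat.prime_of_mem_primeFactors
    (Finset.mem_filter.1 hp).1).ne_zero

theorem cPart_dvd (q n : ℕ) : cPart q n ∣ n := by
  rcases eq_or_ne n 0 with rfl | hn
  · exact dvd_zero _
  rw [← Nat.factorization_le_iff_dvd (cPart_ne_zero q n) hn]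
  intro p
  rw [factorization_cPart]
  split_ifs <;> simp

theorem factorization_div_cPart (q n p : ℕ) :
    (n / cPart q n).factorization p = if p ∣ q then 0 else n.factorization p := by
  rw [Nat.factorization_div (cPart_dvd q n), Finsupp.tsub_apply, factorization_cPart]
  split_ifs <;> simp

theorem div_cPart_ne_zero (q : ℕ) {n : ℕ} (hn : n ≠ 0) : n / cPart q n ≠ 0 :=
  (Nat.div_ne_zero_iff_of_dvd (cPart_dvd q n)).2 ⟨hn, cPart_ne_zero q n⟩

theorem gcd_dvd_cPart (q : ℕ) {n : ℕ} (hn : n ≠ 0) : Nat.gcd q n ∣ cPart q n := by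
  rw [← Nat.factorization_le_iff_dvd (Nat.gcd_ne_zero_right hn) (cPart_ne_zero q n)]
  intro p
  rw [factorization_cPart]
  split_ifs with hp
  · exact (Nat.factorization_le_iff_dvd (Nat.gcd_ne_zero_right hn) hn).2 (Nat.gcd_dvd_right _ _) p
  · exact (Nat.factorization_gcd_eq_zero_of_not_dvd n hp).le

theorem cPart_div_gcd_ne_zero (q : ℕ) {n : ℕ} (hn : n ≠ 0) : cPart q n / Nat.gcd q n ≠ 0 :=
  (Nat.div_ne_zero_iff_of_dvd (gcd_dvd_cPart q hn)).2
    ⟨cPart_ne_zero q n, Nat.gcd_ne_zero_right hn⟩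

theorem coprime_div_cPart (q : ℕ) {n : ℕ} (hn : n ≠ 0) : Nat.Coprime q (n / cPart q n) := by
  refine Nat.coprime_of_dvd fun p hp hpq hpn => ?_
  have := (hp.dvd_iff_one_le_factorization (div_cPart_ne_zero q hn)).1 hpn
  rw [factorization_div_cPart, if_pos hpq] at this
  omega

/-- The additive order of `(k, l)` in `ZMod N × ZMod m`. -/
def addOrderLcm (N m k l : ℕ) : ℕ := Nat.lcm (N / Nat.gcd k N) (m / Nat.gcd l m)

def cPartLevel (N m c : ℕ) : ℕ := cPart c N / Nat.gcd c N * (m / cPart c m)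

section

variable {N m c a b : ℕ}

theorem addOrderLcm_ne_zero (k l : ℕ) (hN : N ≠ 0) (hm : m ≠ 0) : addOrderLcm N m k l ≠ 0 :=
  Nat.lcm_ne_zero (Nat.div_gcd_ne_zero k hN) (Nat.div_gcd_ne_zero l hm)

theorem factorization_addOrderLcm (k l : ℕ) (hN : N ≠ 0) (hm : m ≠ 0) (p : ℕ) :
    (addOrderLcm N m k l).factorization p = max (N.factorization p - (Nat.gcd k N).factorization p)
      (m.factorization p - (Nat.gcd l m).factorization p) := by
  rw [addOrderLcm, Nat.factorization_lcm (Nat.div_gcd_ne_zero k hN) (Nat.div_gcd_ne_zero l hm),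
    Finsupp.sup_apply, Nat.factorization_div_gcd, Nat.factorization_div_gcd]

theorem cPartLevel_ne_zero (hN : N ≠ 0) (hm : m ≠ 0) : cPartLevel N m c ≠ 0 :=
  Nat.mul_ne_zero (cPart_div_gcd_ne_zero c hN) (div_cPart_ne_zero c hm)

theorem factorization_cPartLevel (hN : N ≠ 0) (hm : m ≠ 0) (p : ℕ) :
    (cPartLevel N m c).factorization p =
      if p ∣ c then N.factorization p - (Nat.gcd c N).factorization p else m.factorization p := by
  rw [cPartLevel, Nat.factorization_mul (cPart_div_gcd_ne_zero c hN) (div_cPart_ne_zero c hm),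
    Finsupp.add_apply, Nat.factorization_div (gcd_dvd_cPart c hN), factorization_div_cPart,
    Finsupp.tsub_apply, factorization_cPart]
  split_ifs with hpc
  · simp
  · simp [Nat.factorization_gcd_eq_zero_of_not_dvd N hpc]

theorem cPartLevel_dvd_addOrderLcm (hN : N ≠ 0) (hmN : m ∣ N) (hac : a.Coprime c)
    (hab : a.Coprime b) : cPartLevel N m c ∣ addOrderLcm N m (c * a) (c * b) := by
  have hm := ne_zero_of_dvd_ne_zero hN hmN
  refine (Nat.factorization_prime_le_iff_dvd (cPartLevel_ne_zero hN hm)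
    (addOrderLcm_ne_zero _ _ hN hm)).1 fun p hp => ?_
  rw [factorization_cPartLevel hN hm, factorization_addOrderLcm _ _ hN hm]
  split_ifs with hpc
  · have hpa : ¬ p ∣ a := fun hpa => hp.one_lt.ne' (Nat.eq_one_of_dvd_coprimes hac hpa hpc)
    rw [Nat.factorization_gcd_mul_of_not_dvd c hp hN hpa]
    exact le_max_left _ _
  · by_cases hpa : p ∣ a
    · have hpb : ¬ p ∣ c * b := fun h => (hp.dvd_mul.1 h).elim hpc
        fun hpb => hp.one_lt.ne' (Nat.eq_one_of_dvd_coprimes hab hpa hpb)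
      rw [Nat.factorization_gcd_eq_zero_of_not_dvd m hpb]
      exact le_max_right _ _
    · have hpca : ¬ p ∣ c * a := fun h => (hp.dvd_mul.1 h).elim hpc hpa
      rw [Nat.factorization_gcd_eq_zero_of_not_dvd N hpca]
      exact le_max_of_le_left ((Nat.factorization_le_iff_dvd hm hN).2 hmN p)

theorem addOrderLcm_dvd_cPartLevel (hN : N ≠ 0) (hmN : m ∣ N) (hac : a.Coprime c)
    (ha : N / cPart c N ∣ a) : addOrderLcm N m (c * a) (c * b) ∣ cPartLevel N m c := by
  have hm := ne_zero_of_dvd_ne_zero hN hmN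
  refine (Nat.factorization_prime_le_iff_dvd (addOrderLcm_ne_zero _ _ hN hm)
    (cPartLevel_ne_zero hN hm)).1 fun p hp => ?_
  rw [factorization_cPartLevel hN hm, factorization_addOrderLcm _ _ hN hm]
  split_ifs with hpc
  · have hpa : ¬ p ∣ a := fun hpa => hp.one_lt.ne' (Nat.eq_one_of_dvd_coprimes hac hpa hpc)
    rw [Nat.factorization_gcd_mul_of_not_dvd c hp hN hpa]
    refine max_le le_rfl ?_
    calc m.factorization p - (Nat.gcd (c * b) m).factorization p
        = (m / Nat.gcd (c * b) m).factorization p := (Nat.factorization_div_gcd _ _ _).symm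
      _ ≤ (N / Nat.gcd (c * b) N).factorization p :=
        (Nat.factorization_le_iff_dvd (Nat.div_gcd_ne_zero _ hm) (Nat.div_gcd_ne_zero _ hN)).2
          (Nat.div_gcd_dvd_div_gcd_of_dvd _ hmN) p
      _ ≤ N.factorization p - (Nat.gcd c N).factorization p := by
        rw [Nat.factorization_div_gcd]
        exact Nat.sub_le_sub_left ((Nat.factorization_le_iff_dvd (Nat.gcd_ne_zero_right hN)
          (Nat.gcd_ne_zero_right hN)).2 (Nat.gcd_dvd_gcd_mul_right_left c N b) p) _
  · have hNa : p ^ N.factorization p ∣ Nat.gcd (c * a) N := by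
      refine Nat.dvd_gcd (Dvd.dvd.trans ?_ (ha.trans (Nat.dvd_mul_left a c))) (Nat.ordProj_dvd N p)
      rw [hp.pow_dvd_iff_le_factorization (div_cPart_ne_zero c hN), factorization_div_cPart,
        if_neg hpc]
    have hgcd : (Nat.gcd (c * a) N).factorization p = N.factorization p :=
      le_antisymm
        ((Nat.factorization_le_iff_dvd (Nat.gcd_ne_zero_right hN) hN).2 (Nat.gcd_dvd_right _ _) p)
        ((hp.pow_dvd_iff_le_factorization (Nat.gcd_ne_zero_right hN)).1 hNa)
    rw [hgcd, Nat.sub_self]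
    exact max_le (Nat.zero_le _) (Nat.sub_le _ _)

end

theorem stmt_13_general (N m : ℕ) (hN : 1 ≤ N) (hmdvd : m ∣ N)
    (A B C D : ℤ) (hdet : A * D - B * C = 1)
    (Mu : ℤ → ℕ)
    (hMu : ∀ u : ℤ, Mu u =
      Nat.lcm (N / Int.gcd (C * (u * C + D)) N) (m / Int.gcd (C * (u * A + B)) m))
    (M' : ℕ)
    (hM' : M' = (cPart C.natAbs N / Int.gcd C N) * (m / cPart C.natAbs m)) :
    (∀ u : ℤ, M' ∣ Mu u) ∧
    (∃ u : ℤ, ((N / cPart C.natAbs N : ℕ) : ℤ) ∣ (u * C + D)) ∧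
    (∀ u : ℤ, ((N / cPart C.natAbs N : ℕ) : ℤ) ∣ (u * C + D) → Mu u = M') := by
  have hN0 : N ≠ 0 := by omega
  have hMu' : ∀ u, Mu u =
      addOrderLcm N m (C.natAbs * (u * C + D).natAbs) (C.natAbs * (u * A + B).natAbs) := by
    intro u
    rw [hMu, addOrderLcm, Int.gcd_eq_natAbs, Int.gcd_eq_natAbs, Int.natAbs_mul, Int.natAbs_mul,
      Int.natAbs_natCast, Int.natAbs_natCast]
  have hM'' : M' = cPartLevel N m C.natAbs := by
    rw [hM', cPartLevel, Int.gcd_eq_natAbs, Int.natAbs_natCast]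
  have hxC : ∀ u, (u * C + D).natAbs.Coprime C.natAbs := fun u =>
    Int.isCoprime_iff_nat_coprime.1 ⟨A, -(u * A + B), by linear_combination hdet⟩
  have hxy : ∀ u, (u * C + D).natAbs.Coprime (u * A + B).natAbs := fun u =>
    Int.isCoprime_iff_nat_coprime.1 ⟨A, -C, by linear_combination hdet⟩
  have hdvd : ∀ u, M' ∣ Mu u := fun u => by
    rw [hMu' u, hM'']
    exact cPartLevel_dvd_addOrderLcm hN0 hmdvd (hxC u) (hxy u)
  refine ⟨hdvd, ?_, fun u hu => Nat.dvd_antisymm ?_ (hdvd u)⟩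
  · refine IsCoprime.exists_dvd_mul_add (Int.isCoprime_iff_nat_coprime.2 ?_) D
    rw [Int.natAbs_natCast]
    exact coprime_div_cPart _ hN0
  · rw [hMu' u, hM'']
    exact addOrderLcm_dvd_cPartLevel hN0 hmdvd (hxC u) (Int.natCast_dvd.1 hu)

/-- Let `m` be a positive divisor of `N ≥ 1` and `(A,B;C,D) ∈ SL₂(ℤ)`.
For `u ∈ ℤ` set `M_u = lcm(N/gcd(C(uC+D),N), m/gcd(C(uA+B),m))`, and set
`M' = (N_C/gcd(C,N))·m_{C̄}` where `n_C` is the largest divisor of `n` whose prime factors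
divide `C` and `n_{C̄} = n/n_C`. Then (i) `M' ∣ M_u` for all `u`; (ii) there is `u` with
`N/N_C ∣ uC+D`, and every such `u` has `M_u = M'`. -/
theorem stmt_13 (N m : ℕ) (hN : 1 ≤ N) (hmpos : 0 < m) (hmdvd : m ∣ N)
    (A B C D : ℤ) (hdet : A * D - B * C = 1)
    (Mu : ℤ → ℕ)
    (hMu : ∀ u : ℤ, Mu u =
      Nat.lcm (N / Int.gcd (C * (u * C + D)) N) (m / Int.gcd (C * (u * A + B)) m))
    (M' : ℕ)
    (hM' : M' = (cPart C.natAbs N / Int.gcd C N) * (m / cPart C.natAbs m)) :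
    (∀ u : ℤ, M' ∣ Mu u) ∧
    (∃ u : ℤ, ((N / cPart C.natAbs N : ℕ) : ℤ) ∣ (u * C + D)) ∧
    (∀ u : ℤ, ((N / cPart C.natAbs N : ℕ) : ℤ) ∣ (u * C + D) → Mu u = M') :=
  stmt_13_general N m hN hmdvd A B C D hdet Mu hMu M' hM'
end

section
/- Let N ≥ 1 and let M be a positive divisor of N. Then the subgroup of SL₂(ℤ) generated by Γ₀(N) together with the matrix (1, 0; M, 1) is equal to Γ₀(M). -/
/-!
Since `Γ₀(N) ≤ Γ₀(M)` and `(1, 0; M, 1) ∈ Γ₀(M)`, only `Γ₀(M) ≤ H` needs an argument, where `H` is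
the generated subgroup. Given `γ = (a, b; c, d) ∈ Γ₀(M)`, the translation `T ^ j ∈ Γ₀(N)` replaces
`a` by `a + j c`, which for a suitable `j` is prime to `N` (take for `j` the product of the primes
dividing `N` but not `a`). Then, writing `c = M c₀`, the lower unipotent `(1, 0; k M, 1)`, a power
of the extra generator, changes `c` into `M (k (a + j c) + c₀)`, and `k` can be chosen to make this
divisible by `N`. The resulting matrix lies in `Γ₀(N)`, so `γ ∈ H`.
-/

open CongruenceSubgroup
open scoped MatrixGroups

/-- The matrix `(1, 0; M, 1)` as an element of `SL₂(ℤ)`. -/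
def RM (M : ℕ) : SL(2, ℤ) :=
  ⟨!![1, 0; (M : ℤ), 1], by simp [Matrix.det_fin_two_of]⟩

open Matrix.SpecialLinearGroup ModularGroup

lemma Int.exists_isCoprime_add_mul {a c : ℤ} (hac : IsCoprime a c) {n : ℤ} (hn : n ≠ 0) :
    ∃ j : ℤ, IsCoprime (a + j * c) n := by
  let j : ℤ := ∏ p ∈ n.natAbs.primeFactors.filter (fun p : ℕ ↦ ¬ (p : ℤ) ∣ a), (p : ℤ)
  refine ⟨j, Int.isCoprime_iff_gcd_eq_one.2 <| Nat.coprime_of_dvd fun p hp hpa' hpn ↦ ?_⟩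
  rw [← Int.natCast_dvd] at hpa' hpn
  have hpZ : Prime (p : ℤ) := Nat.prime_iff_prime_int.mp hp
  by_cases hpa : (p : ℤ) ∣ a
  · have hpc : ¬ (p : ℤ) ∣ c := fun hpc ↦ hpZ.not_isUnit (hac.isUnit_of_dvd' hpa hpc)
    have hpj : ¬ (p : ℤ) ∣ j := by
      rw [hpZ.dvd_finsetProd_iff]
      rintro ⟨q, hq, hpq⟩
      rw [Finset.mem_filter, Nat.mem_primeFactors] at hq
      rw [Int.natCast_dvd_natCast, Nat.prime_dvd_prime_iff_eq hp hq.1.1] at hpq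
      exact hq.2 (hpq ▸ hpa)
    have hpjc : (p : ℤ) ∣ j * c := by simpa using dvd_sub hpa' hpa
    exact (hpZ.dvd_mul.1 hpjc).elim hpj hpc
  · have hpj : (p : ℤ) ∣ j := Finset.dvd_prod_of_mem _ <| Finset.mem_filter.2
      ⟨Nat.mem_primeFactors.2 ⟨hp, Int.natCast_dvd.1 hpn, Int.natAbs_ne_zero.2 hn⟩, hpa⟩
    exact hpa (by simpa using dvd_sub hpa' (hpj.mul_right c))

lemma Gamma0_le_of_dvd {M N : ℕ} (h : M ∣ N) : Gamma0 N ≤ Gamma0 M := by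
  intro γ
  simp only [Gamma0_mem, ZMod.intCast_zmod_eq_zero_iff_dvd]
  exact (Int.natCast_dvd_natCast.2 h).trans

lemma T_mem_Gamma0 (N : ℕ) : T ∈ Gamma0 N := by
  rw [Gamma0_mem]
  simp [T]

lemma RM_mem_Gamma0 (M : ℕ) : RM M ∈ Gamma0 M := by
  rw [Gamma0_mem]
  simp [RM]

lemma T_pow_mul_apply_zero_zero (j : ℤ) (g : SL(2, ℤ)) :
    (T ^ j * g) 0 0 = g 0 0 + j * g 1 0 := by
  simp [coe_T_zpow, Matrix.mul_apply, Fin.sum_univ_two]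

def lowerUnipotent (x : ℤ) : SL(2, ℤ) :=
  ⟨!![1, 0; x, 1], by simp [Matrix.det_fin_two_of]⟩

lemma coe_lowerUnipotent (x : ℤ) : (lowerUnipotent x).1 = !![1, 0; x, 1] := rfl

lemma RM_eq_lowerUnipotent (M : ℕ) : RM M = lowerUnipotent M := rfl

lemma lowerUnipotent_zero : lowerUnipotent 0 = 1 := by
  ext i j
  fin_cases i <;> fin_cases j <;> simp [coe_lowerUnipotent]

lemma lowerUnipotent_add (x y : ℤ) :
    lowerUnipotent (x + y) = lowerUnipotent x * lowerUnipotent y := by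
  ext i j
  fin_cases i <;> fin_cases j <;> simp [coe_lowerUnipotent, Matrix.mul_apply, add_comm]

lemma lowerUnipotent_zpow (x k : ℤ) : lowerUnipotent x ^ k = lowerUnipotent (k * x) := by
  have hinv : (lowerUnipotent x)⁻¹ = lowerUnipotent (-x) :=
    inv_eq_of_mul_eq_one_right (by rw [← lowerUnipotent_add, add_neg_cancel, lowerUnipotent_zero])
  induction k using Int.induction_on with
  | zero => rw [zpow_zero, zero_mul, lowerUnipotent_zero]
  | succ n ih => rw [_root_.zpow_add_one, ih, ← lowerUnipotent_add]; ring_nf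
  | pred n ih => rw [_root_.zpow_sub_one, ih, hinv, ← lowerUnipotent_add]; ring_nf

lemma lowerUnipotent_mul_apply_one_zero (y : ℤ) (g : SL(2, ℤ)) :
    (lowerUnipotent y * g) 1 0 = y * g 0 0 + g 1 0 := by
  simp [coe_lowerUnipotent, Matrix.mul_apply, Fin.sum_univ_two]

lemma exists_lowerUnipotent_mul_T_zpow_mul_mem_Gamma0 {M N : ℕ} (hMN : M ∣ N) (hN : N ≠ 0)
    {γ : SL(2, ℤ)} (hγ : γ ∈ Gamma0 M) :
    ∃ j k : ℤ, lowerUnipotent (k * M) * (T ^ j * γ) ∈ Gamma0 N := by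
  obtain ⟨c₀, hc₀⟩ : (M : ℤ) ∣ γ 1 0 := (ZMod.intCast_zmod_eq_zero_iff_dvd _ _).1 (Gamma0_mem.1 hγ)
  obtain ⟨j, hj⟩ := Int.exists_isCoprime_add_mul (isCoprime_col γ 0) (Int.natCast_ne_zero.2 hN)
  obtain ⟨Q, rfl⟩ := hMN
  push_cast at hj
  obtain ⟨u, v, huv⟩ := hj.of_mul_right_right
  -- `u` inverts `a + j c` modulo `Q = N / M`, so `k = -c₀ u` kills `k (a + j c) + c₀` modulo `Q`.
  refine ⟨j, -(c₀ * u), ?_⟩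
  rw [Gamma0_mem, ZMod.intCast_zmod_eq_zero_iff_dvd, lowerUnipotent_mul_apply_one_zero,
    T_pow_mul_apply_zero_zero, T_pow_mul_apply_one]
  exact ⟨c₀ * v, by push_cast; linear_combination -(M * c₀) * huv + hc₀⟩

theorem stmt_15_general (N M : ℕ) (hN : 1 ≤ N) (hMdvd : M ∣ N) :
    Subgroup.closure ((Gamma0 N : Set SL(2, ℤ)) ∪ {RM M}) = Gamma0 M := by
  refine le_antisymm ((Subgroup.closure_le _).2 <| Set.union_subset (Gamma0_le_of_dvd hMdvd)
    (Set.singleton_subset_iff.2 (RM_mem_Gamma0 M))) fun γ hγ ↦ ?_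
  set H := Subgroup.closure ((Gamma0 N : Set SL(2, ℤ)) ∪ {RM M})
  obtain ⟨j, k, hreduced⟩ :=
    exists_lowerUnipotent_mul_T_zpow_mul_mem_Gamma0 hMdvd (by omega) hγ
  have hL : lowerUnipotent (k * M) ∈ H := by
    rw [← lowerUnipotent_zpow, ← RM_eq_lowerUnipotent]
    exact zpow_mem (Subgroup.subset_closure (Set.mem_union_right _ (Set.mem_singleton _))) k
  have hT : T ^ j ∈ H :=
    Subgroup.subset_closure (Set.mem_union_left _ (zpow_mem (T_mem_Gamma0 N) j))
  rw [← Subgroup.mul_mem_cancel_left H hT, ← Subgroup.mul_mem_cancel_left H hL]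
  exact Subgroup.subset_closure (Set.mem_union_left _ hreduced)

/-- Let `M` be a positive divisor of `N ≥ 1`. Then the subgroup of
`SL₂(ℤ)` generated by `Γ₀(N)` together with the matrix `(1, 0; M, 1)` equals `Γ₀(M)`. -/
theorem stmt_15 (N M : ℕ) (hN : 1 ≤ N) (hMpos : 0 < M) (hMdvd : M ∣ N) :
    Subgroup.closure ((Gamma0 N : Set SL(2, ℤ)) ∪ {RM M}) = Gamma0 M :=
  stmt_15_general N M hN hMdvd
end
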